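/- Let μ be an aromatic molecule (connected rootless aromatic forest) and f = f₁ ⊕ f₂ a partitioned vector field on ℝ^{m+n}. Then the scalar elementary differential is additive: F(μ)(f₁ ⊕ f₂)(x,y) = F(μ)(f₁)(x) + F(μ)(f₂)(y). As a concrete instance, taking μ the one-vertex loop so F(μ)(f) = div f: div(f₁⊕f₂)(x,y) = div f₁(x) + div f₂(y). -/

import Mathlib

/-- Iterated partial derivative of a scalar function on `ℝⁿ` in the directions
given by a list of coordinate indices. -/
noncomputable def pderiv (n : ℕ) : List (Fin n) → ((Fin n → ℝ) → ℝ) → ((Fin n → ℝ) → ℝ)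
  | [], h => h
  | i :: l, h => fun x => fderiv ℝ (pderiv n l h) x (Pi.single i 1)

/-- The scalar elementary differential of a rootless graph (every vertex has
exactly one outgoing edge, given by `out : V → V`):
`F(μ)(f)(x) = Σ_{ν : V → [n]} ∏_v ∂_{ν(P(v))} f^{ν(v)}(x)`. -/
noncomputable def eldScalar (n : ℕ) {V : Type} [Fintype V] [DecidableEq V]
    (out : V → V) (f : (Fin n → ℝ) → Fin n → ℝ) (x : Fin n → ℝ) : ℝ :=
  ∑ ν : V → Fin n,
    ∏ v : V,
      pderiv n (((Finset.univ.filter fun u => out u = v).toList).map ν)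
        (fun y => f y (ν v)) x

/-- The direct sum (partitioned vector field) `f ⊕ g` on `ℝ^(m+n)`. -/
def oplus (m n : ℕ) (f : (Fin m → ℝ) → Fin m → ℝ) (g : (Fin n → ℝ) → Fin n → ℝ) :
    (Fin (m + n) → ℝ) → Fin (m + n) → ℝ :=
  fun z => Fin.append (f fun i => z (Fin.castAdd n i)) (g fun i => z (Fin.natAdd m i))

/-- The divergence of a vector field on `ℝⁿ`. -/
noncomputable def divg (n : ℕ) (f : (Fin n → ℝ) → Fin n → ℝ) (x : Fin n → ℝ) : ℝ :=
  ∑ i : Fin n, fderiv ℝ (fun y => f y i) x (Pi.single i 1)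

noncomputable def projL (N p : ℕ) (e : Fin p → Fin N) : (Fin N → ℝ) →L[ℝ] (Fin p → ℝ) :=
  ContinuousLinearMap.pi fun i => ContinuousLinearMap.proj (e i)

@[simp] lemma projL_apply (N p : ℕ) (e : Fin p → Fin N) (z : Fin N → ℝ) :
    projL N p e z = fun i => z (e i) := rfl

lemma projL_single_mem {N p : ℕ} {e : Fin p → Fin N} (he : Function.Injective e) (i : Fin p) :
    projL N p e (Pi.single (e i) 1) = Pi.single i 1 := by
  funext j
  simp [Pi.single_apply, he.eq_iff]

lemma projL_single_not {N p : ℕ} {e : Fin p → Fin N} {a : Fin N} (ha : a ∉ Set.range e) :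
    projL N p e (Pi.single a 1) = 0 := by
  funext j
  have : e j ≠ a := fun h => ha ⟨j, h⟩
  simp [Pi.single_apply, this]

lemma contDiff_pderiv {n : ℕ} (l : List (Fin n)) {h : (Fin n → ℝ) → ℝ}
    (hh : ContDiff ℝ (⊤ : ℕ∞) h) : ContDiff ℝ (⊤ : ℕ∞) (pderiv n l h) := by
  induction l with
  | nil => exact hh
  | cons i t ih => exact (ih.fderiv_right (by simp)).clm_apply contDiff_const

lemma fderiv_comp_projL {N p : ℕ} (e : Fin p → Fin N) (g : (Fin p → ℝ) → ℝ)
    (z : Fin N → ℝ) (hg : DifferentiableAt ℝ g (projL N p e z)) (v : Fin N → ℝ) :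
    fderiv ℝ (fun z => g (projL N p e z)) z v = fderiv ℝ g (projL N p e z) (projL N p e v) := by
  rw [show (fun z => g (projL N p e z)) = g ∘ (projL N p e) from rfl,
    fderiv_comp z hg (projL N p e).differentiableAt, (projL N p e).fderiv]
  rfl

lemma pderiv_comp {N p : ℕ} {e : Fin p → Fin N} (he : Function.Injective e)
    {h : (Fin p → ℝ) → ℝ} (hh : ContDiff ℝ (⊤ : ℕ∞) h) (l : List (Fin p)) :
    pderiv N (l.map e) (fun z => h (projL N p e z)) =
      fun z => pderiv p l h (projL N p e z) := by
  induction l with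
  | nil => rfl
  | cons i t ih =>
    funext z
    show fderiv ℝ (pderiv N (t.map e) fun z => h (projL N p e z)) z (Pi.single (e i) 1) = _
    rw [ih, fderiv_comp_projL e _ z ((contDiff_pderiv t hh).differentiable (by simp) _),
      projL_single_mem he]
    rfl

lemma exists_preimage_list {α β : Type*} (e : α → β) (t : List β)
    (H : ∀ a ∈ t, ∃ c, e c = a) : ∃ t' : List α, t'.map e = t := by
  induction t with
  | nil => exact ⟨[], rfl⟩
  | cons b t ih =>
    obtain ⟨c, hc⟩ := H b (by simp)
    obtain ⟨t', ht'⟩ := ih (fun a ha => H a (by simp [ha]))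
    exact ⟨c :: t', by simp [hc, ht']⟩

lemma pderiv_comp_zero {N p : ℕ} {e : Fin p → Fin N} (he : Function.Injective e)
    {h : (Fin p → ℝ) → ℝ} (hh : ContDiff ℝ (⊤ : ℕ∞) h) (l : List (Fin N))
    (hl : ∃ a ∈ l, a ∉ Set.range e) :
    pderiv N l (fun z => h (projL N p e z)) = fun _ => 0 := by
  induction l with
  | nil => simp at hl
  | cons a t ih =>
    by_cases ht : ∃ b ∈ t, b ∉ Set.range e
    · funext z
      show fderiv ℝ (pderiv N t fun z => h (projL N p e z)) z (Pi.single a 1) = 0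
      rw [ih ht]
      simp [fderiv_const]
    · push_neg at ht
      have ha : a ∉ Set.range e := by
        obtain ⟨b, hb, hbr⟩ := hl
        rcases List.mem_cons.mp hb with rfl | hb'
        · exact hbr
        · exact absurd (ht b hb') hbr
      obtain ⟨t', rfl⟩ := exists_preimage_list e t (fun b hb => ht b hb)
      funext z
      show fderiv ℝ (pderiv N (t'.map e) fun z => h (projL N p e z)) z (Pi.single a 1) = 0
      rw [pderiv_comp he hh, fderiv_comp_projL e _ z
        ((contDiff_pderiv t' hh).differentiable (by simp) _), projL_single_not ha]
      simp

lemma range_castAdd {m n : ℕ} {a : Fin (m + n)} :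
    a ∈ Set.range (Fin.castAdd n : Fin m → Fin (m + n)) ↔ (a : ℕ) < m := by
  constructor
  · rintro ⟨i, rfl⟩; exact i.isLt
  · intro h; exact ⟨⟨a, h⟩, Fin.ext rfl⟩

lemma range_natAdd {m n : ℕ} {a : Fin (m + n)} :
    a ∈ Set.range (Fin.natAdd m : Fin n → Fin (m + n)) ↔ m ≤ (a : ℕ) := by
  constructor
  · rintro ⟨i, rfl⟩; simp
  · intro h
    refine ⟨⟨a - m, by omega⟩, Fin.ext ?_⟩
    simp [Fin.natAdd]; omega

lemma castAdd_inj {m n : ℕ} : Function.Injective (Fin.castAdd n : Fin m → Fin (m + n)) :=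
  Fin.castAdd_injective m n

lemma natAdd_inj {m n : ℕ} : Function.Injective (Fin.natAdd m : Fin n → Fin (m + n)) := by
  intro a b h
  have := congrArg Fin.val h
  simp [Fin.natAdd] at this
  exact Fin.ext this

lemma exists_edge_diff {V : Type} {r : V → V → Prop} {P : V → Prop} {v w : V}
    (hvw : Relation.ReflTransGen r v w) (hv : P v) (hw : ¬ P w) :
    ∃ a b, r a b ∧ P a ∧ ¬ P b := by
  induction hvw with
  | refl => exact absurd hv hw
  | @tail b w' _ hbw ih =>
    by_cases hb : P b
    · exact ⟨b, w', hbw, hb, hw⟩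
    · exact ih hb

/-- For an aromatic molecule `μ` (connected, every vertex with
exactly one outgoing edge) the scalar elementary differential is additive on
partitioned vector fields; in particular (one-vertex loop) the divergence is
additive: `div (f₁ ⊕ f₂) (x, y) = div f₁ x + div f₂ y`. -/
theorem molecule_additive (m n : ℕ) {V : Type} [Fintype V] [DecidableEq V] [Nonempty V]
    (out : V → V)
    (hconn : ∀ v w : V,
      Relation.ReflTransGen (fun a b : V => out a = b ∨ out b = a) v w)
    (f₁ : (Fin m → ℝ) → Fin m → ℝ) (f₂ : (Fin n → ℝ) → Fin n → ℝ)
    (h₁ : ContDiff ℝ (⊤ : ℕ∞) f₁) (h₂ : ContDiff ℝ (⊤ : ℕ∞) f₂) :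
    (∀ z : Fin (m + n) → ℝ,
      eldScalar (m + n) out (oplus m n f₁ f₂) z =
        eldScalar m out f₁ (fun i => z (Fin.castAdd n i)) +
          eldScalar n out f₂ (fun i => z (Fin.natAdd m i))) ∧
    ∀ z : Fin (m + n) → ℝ,
      divg (m + n) (oplus m n f₁ f₂) z =
        divg m f₁ (fun i => z (Fin.castAdd n i)) +
          divg n f₂ (fun i => z (Fin.natAdd m i)) := by
  classical
  have hs₁ : ∀ k : Fin m, ContDiff ℝ (⊤ : ℕ∞) (fun x => f₁ x k) := fun k => contDiff_pi.mp h₁ k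
  have hs₂ : ∀ k : Fin n, ContDiff ℝ (⊤ : ℕ∞) (fun x => f₂ x k) := fun k => contDiff_pi.mp h₂ k
  have hcomp₁ : ∀ k : Fin m, (fun y => oplus m n f₁ f₂ y (Fin.castAdd n k)) =
      fun y => (fun x => f₁ x k) (projL (m+n) m (Fin.castAdd n) y) := by
    intro k; funext y; simp [oplus, Fin.append_left]
  have hcomp₂ : ∀ k : Fin n, (fun y => oplus m n f₁ f₂ y (Fin.natAdd m k)) =
      fun y => (fun x => f₂ x k) (projL (m+n) n (Fin.natAdd m) y) := by
    intro k; funext y; simp [oplus, Fin.append_right]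
  constructor
  · intro z
    set F : (V → Fin (m+n)) → ℝ := fun ν =>
      ∏ v : V, pderiv (m+n) (((Finset.univ.filter fun u => out u = v).toList).map ν)
        (fun y => oplus m n f₁ f₂ y (ν v)) z with hF
    have hzero : ∀ ν : V → Fin (m+n), (∃ v, ((ν v : ℕ) < m)) →
        (∃ v, ¬((ν v : ℕ) < m)) → F ν = 0 := by
      rintro ν ⟨v, hv⟩ ⟨w, hw⟩
      obtain ⟨a, b, hr, hPa, hPb⟩ :=
        exists_edge_diff (P := fun v => (ν v : ℕ) < m) (hconn v w) hv hw
      obtain ⟨u, hu⟩ : ∃ u, ¬ (((ν u : ℕ) < m) ↔ ((ν (out u) : ℕ) < m)) := by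
        rcases hr with h1 | h2
        · exact ⟨a, by rw [h1]; tauto⟩
        · exact ⟨b, by rw [h2]; tauto⟩
      have humem : ν u ∈ ((Finset.univ.filter fun u' => out u' = out u).toList).map ν :=
        List.mem_map_of_mem (f := ν)
          (Finset.mem_toList.mpr (Finset.mem_filter.mpr ⟨Finset.mem_univ u, rfl⟩))
      apply Finset.prod_eq_zero (Finset.mem_univ (out u))
      by_cases hv' : (ν (out u) : ℕ) < m
      · obtain ⟨k, hk⟩ := range_castAdd.mpr hv'
        rw [← hk, hcomp₁ k,
          pderiv_comp_zero castAdd_inj (hs₁ k) _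
            ⟨ν u, humem, fun hmem => (by tauto : ¬ ((ν u : ℕ) < m)) (range_castAdd.mp hmem)⟩]
      · obtain ⟨k, hk⟩ := range_natAdd.mpr (by omega : m ≤ (ν (out u) : ℕ))
        rw [← hk, hcomp₂ k,
          pderiv_comp_zero natAdd_inj (hs₂ k) _
            ⟨ν u, humem, fun hmem => by
              have := range_natAdd.mp hmem
              have : (ν u : ℕ) < m := by tauto
              omega⟩]
    set A : Finset (V → Fin (m+n)) :=
      Finset.univ.image (fun σ : V → Fin m => fun v => Fin.castAdd n (σ v)) with hA
    set B : Finset (V → Fin (m+n)) :=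
      Finset.univ.image (fun σ : V → Fin n => fun v => Fin.natAdd m (σ v)) with hB
    have hAB : Disjoint A B := by
      rw [Finset.disjoint_left]
      rintro ν hν₁ hν₂
      obtain ⟨v₀⟩ := ‹Nonempty V›
      obtain ⟨σ, -, rfl⟩ := Finset.mem_image.mp hν₁
      obtain ⟨τ, -, hτ⟩ := Finset.mem_image.mp hν₂
      have := congrFun hτ v₀
      have h1 : (Fin.natAdd m (τ v₀) : ℕ) = (Fin.castAdd n (σ v₀) : ℕ) := by rw [this]
      simp at h1
      omega
    have hsub : ∀ ν ∈ Finset.univ, ν ∉ A ∪ B → F ν = 0 := by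
      intro ν _ hν
      rw [Finset.mem_union] at hν
      push_neg at hν
      apply hzero
      · by_contra hall
        push_neg at hall
        exact hν.2 (Finset.mem_image.mpr ⟨fun v => ⟨(ν v : ℕ) - m, by have := hall v; omega⟩,
          Finset.mem_univ _, by
            funext v; apply Fin.ext; simp [Fin.natAdd]; have := hall v; omega⟩)
      · by_contra hall
        push_neg at hall
        exact hν.1 (Finset.mem_image.mpr ⟨fun v => ⟨(ν v : ℕ), hall v⟩,
          Finset.mem_univ _, by funext v; exact Fin.ext rfl⟩)
    have hsplit : eldScalar (m+n) out (oplus m n f₁ f₂) z = ∑ ν ∈ A ∪ B, F ν := by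
      rw [eldScalar]
      exact (Finset.sum_subset (Finset.subset_univ _) hsub).symm
    rw [hsplit, Finset.sum_union hAB]
    have hAsum : ∑ ν ∈ A, F ν = eldScalar m out f₁ (fun i => z (Fin.castAdd n i)) := by
      rw [hA, Finset.sum_image (by
        intro σ _ τ _ h
        funext v
        exact castAdd_inj (congrFun h v)), eldScalar]
      apply Finset.sum_congr rfl
      intro σ _
      apply Finset.prod_congr rfl
      intro v _
      have hlist : ((Finset.univ.filter fun u => out u = v).toList).map
          (fun u => Fin.castAdd n (σ u)) =
          (((Finset.univ.filter fun u => out u = v).toList).map σ).map (Fin.castAdd n) := by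
        rw [List.map_map]; rfl
      rw [hlist, hcomp₁ (σ v), pderiv_comp castAdd_inj (hs₁ (σ v))]
      rfl
    have hBsum : ∑ ν ∈ B, F ν = eldScalar n out f₂ (fun i => z (Fin.natAdd m i)) := by
      rw [hB, Finset.sum_image (by
        intro σ _ τ _ h
        funext v
        exact natAdd_inj (congrFun h v)), eldScalar]
      apply Finset.sum_congr rfl
      intro σ _
      apply Finset.prod_congr rfl
      intro v _
      have hlist : ((Finset.univ.filter fun u => out u = v).toList).map
          (fun u => Fin.natAdd m (σ u)) =
          (((Finset.univ.filter fun u => out u = v).toList).map σ).map (Fin.natAdd m) := by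
        rw [List.map_map]; rfl
      rw [hlist, hcomp₂ (σ v), pderiv_comp natAdd_inj (hs₂ (σ v))]
      rfl
    rw [hAsum, hBsum]
  · intro z
    rw [divg, Fin.sum_univ_add]
    congr 1
    · apply Finset.sum_congr rfl
      intro i _
      rw [hcomp₁ i, fderiv_comp_projL _ _ z ((hs₁ i).differentiable (by simp) _),
        projL_single_mem castAdd_inj]
      rfl
    · apply Finset.sum_congr rfl
      intro i _
      rw [hcomp₂ i, fderiv_comp_projL _ _ z ((hs₂ i).differentiable (by simp) _),
        projL_single_mem natAdd_inj]
      rfl
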